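/- arXiv:2107.09684 — 4 statements merged into one kernel-verified Lean document; each statement's English description precedes it below -/
import Mathlib

section
/- In F_2[x_1,...,x_{k-1}]/(x_i^2-x_i), the polynomial p which is the indicator function of the set {0, e_1, ..., e_{k-1}} (the origin and the k-1 standard basis vectors) has degree k-2 if k is even and degree k-1 if k is odd. -/
/-!
Every Boolean function `f` on `𝔽₂^m` is interpolated by `∑ₐ f(a) ∏ᵢ (xᵢ + aᵢ + 1)`, whose only
possible monomial of degree `m` is `(∑ₓ f(x)) x₁⋯xₘ`; so `deg f ≤ m`, and `deg f ≤ m - 1` when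
`∑ₓ f(x) = 0`. Conversely, `∑ₓ q(x) = 0` for every polynomial `q` of degree `< m` (the lemma behind
Chevalley–Warning), so `∑ₓ f(x) ≠ 0` forces `deg f ≥ m`; applied to `(xᵢ + 1) q`, the condition
`∑ₓ (xᵢ + 1) f(x) ≠ 0` forces `deg f ≥ m - 1`. For the indicator of `{0, e₁, …, eₘ}` these two
sums are `m + 1` and `m` in `𝔽₂`.
-/

/-- `p` represents the Boolean function `f`. -/
def Represents {m : ℕ} (p : MvPolynomial (Fin m) (ZMod 2))
    (f : (Fin m → ZMod 2) → ZMod 2) : Prop :=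
  ∀ x, MvPolynomial.eval x p = f x

/-- The degree of a nonzero Boolean function: the least total degree of a polynomial
representing it. -/
noncomputable def natBDeg {m : ℕ} (f : (Fin m → ZMod 2) → ZMod 2) : ℕ :=
  sInf {d : ℕ | ∃ p, Represents p f ∧ p.totalDegree ≤ d}

open MvPolynomial Finset

section TotalDegree

variable {σ R : Type*} [CommRing R]

lemma totalDegree_X_le (i : σ) : (X i : MvPolynomial σ R).totalDegree ≤ 1 :=
  (totalDegree_monomial_le _ _).trans (by simp)

lemma totalDegree_sum_C_mul_le {ι : Type*} (s : Finset ι) (c : ι → R)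
    (g : ι → MvPolynomial σ R) {d : ℕ} (hg : ∀ i ∈ s, (g i).totalDegree ≤ d) :
    (∑ i ∈ s, C (c i) * g i).totalDegree ≤ d := by
  refine (totalDegree_finsetSum _ _).trans (Finset.sup_le fun i hi => ?_)
  refine (totalDegree_mul _ _).trans ?_
  simpa using hg i hi

lemma totalDegree_prod_X_mul_C_le (t : Finset σ) (r : R) :
    ((∏ i ∈ t, X i) * C r : MvPolynomial σ R).totalDegree ≤ #t := by
  refine (totalDegree_mul _ _).trans ?_
  rw [totalDegree_C, add_zero]
  refine (totalDegree_finsetProd _ _).trans ?_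
  simpa using Finset.sum_le_card_nsmul t _ 1 fun i _ => totalDegree_X_le (R := R) i

variable [Fintype σ] [DecidableEq σ]

lemma totalDegree_prod_X_add_C_le (c : σ → R) :
    (∏ i, (X i + C (c i)) : MvPolynomial σ R).totalDegree ≤ Fintype.card σ := by
  rw [Finset.prod_add]
  refine (totalDegree_finsetSum _ _).trans (Finset.sup_le fun t _ => ?_)
  rw [← map_prod]
  exact (totalDegree_prod_X_mul_C_le t _).trans (card_le_univ t)

lemma totalDegree_prod_X_add_C_sub_prod_X_le (c : σ → R) :
    (∏ i, (X i + C (c i)) - ∏ i, X i : MvPolynomial σ R).totalDegree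
      ≤ Fintype.card σ - 1 := by
  rw [Finset.prod_add, ← Finset.add_sum_erase _ _ (mem_powerset_self _), sdiff_self, bot_eq_empty,
    prod_empty, mul_one, add_sub_cancel_left]
  refine (totalDegree_finsetSum _ _).trans (Finset.sup_le fun t ht => ?_)
  have hcard : #t < Fintype.card σ := (card_lt_iff_ne_univ t).mpr (ne_of_mem_erase ht)
  rw [← map_prod]
  exact (totalDegree_prod_X_mul_C_le t _).trans (by omega)

end TotalDegree

section BooleanFunction

variable {σ : Type*} [Fintype σ]

noncomputable def pointIndicator (a : σ → ZMod 2) : MvPolynomial σ (ZMod 2) :=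
  ∏ i, (X i + C (a i + 1))

lemma eval_pointIndicator (x a : σ → ZMod 2) :
    eval x (pointIndicator a) = if x = a then 1 else 0 := by
  simp only [pointIndicator, map_prod, map_add, eval_X, eval_C]
  split_ifs with h
  · subst h
    exact prod_eq_one fun i _ => by generalize x i = u; revert u; decide
  · obtain ⟨i, hi⟩ := Function.ne_iff.mp h
    refine prod_eq_zero (mem_univ i) ?_
    generalize x i = u, a i = v at hi
    revert u v; decide

variable [DecidableEq σ]

noncomputable def interpolant (f : (σ → ZMod 2) → ZMod 2) : MvPolynomial σ (ZMod 2) :=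
  ∑ a, C (f a) * pointIndicator a

lemma eval_interpolant (f : (σ → ZMod 2) → ZMod 2) (x : σ → ZMod 2) :
    eval x (interpolant f) = f x := by
  simp [interpolant, eval_pointIndicator]

lemma totalDegree_interpolant_le (f : (σ → ZMod 2) → ZMod 2) :
    (interpolant f).totalDegree ≤ Fintype.card σ :=
  totalDegree_sum_C_mul_le _ _ _ fun _ _ => totalDegree_prod_X_add_C_le _

lemma totalDegree_interpolant_le_of_sum_eq_zero (f : (σ → ZMod 2) → ZMod 2)
    (hf : ∑ a, f a = 0) : (interpolant f).totalDegree ≤ Fintype.card σ - 1 := by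
  have h : interpolant f = ∑ a, C (f a) * (pointIndicator a - ∏ i, X i) := by
    simp only [mul_sub, sum_sub_distrib, ← sum_mul, ← map_sum, hf, map_zero, zero_mul,
      sub_zero, interpolant]
  rw [h]
  exact totalDegree_sum_C_mul_le _ _ _ fun _ _ => totalDegree_prod_X_add_C_sub_prod_X_le _

variable {m : ℕ}

lemma natBDeg_eq_of_represents {f : (Fin m → ZMod 2) → ZMod 2} {d : ℕ}
    (p : MvPolynomial (Fin m) (ZMod 2)) (hp : Represents p f) (hpd : p.totalDegree ≤ d)
    (hmin : ∀ q, Represents q f → d ≤ q.totalDegree) : natBDeg f = d :=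
  le_antisymm (Nat.sInf_le ⟨p, hp, hpd⟩)
    (le_csInf ⟨d, p, hp, hpd⟩ fun _ ⟨q, hq, hqe⟩ => (hmin q hq).trans hqe)

lemma card_le_totalDegree_of_sum_ne_zero {p : MvPolynomial (Fin m) (ZMod 2)}
    {f : (Fin m → ZMod 2) → ZMod 2} (hp : Represents p f) (hf : ∑ x, f x ≠ 0) :
    m ≤ p.totalDegree := by
  by_contra! hlt
  refine hf ?_
  rw [← sum_eval_eq_zero p (by simpa using hlt)]
  exact sum_congr rfl fun x _ => (hp x).symm

lemma card_sub_one_le_totalDegree_of_sum_ne_zero {p : MvPolynomial (Fin m) (ZMod 2)}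
    {f : (Fin m → ZMod 2) → ZMod 2} (hp : Represents p f) (i : Fin m)
    (hf : ∑ x, (x i + 1) * f x ≠ 0) : m - 1 ≤ p.totalDegree := by
  have hmul : Represents ((X i + 1) * p) fun x => (x i + 1) * f x := fun x => by
    simp [hp x]
  have hdeg : (X i + 1 : MvPolynomial (Fin m) (ZMod 2)).totalDegree ≤ 1 :=
    (totalDegree_add _ _).trans (by simp)
  have := card_le_totalDegree_of_sum_ne_zero hmul hf
  have := totalDegree_mul (X i + 1) p
  omega

lemma natBDeg_eq_of_sum_ne_zero {f : (Fin m → ZMod 2) → ZMod 2} (hf : ∑ x, f x ≠ 0) :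
    natBDeg f = m :=
  natBDeg_eq_of_represents _ (eval_interpolant f)
    (by simpa using totalDegree_interpolant_le f)
    fun _ hq => card_le_totalDegree_of_sum_ne_zero hq hf

lemma natBDeg_eq_of_sum_eq_zero {f : (Fin m → ZMod 2) → ZMod 2} (hf : ∑ x, f x = 0)
    (i : Fin m) (hi : ∑ x, (x i + 1) * f x ≠ 0) : natBDeg f = m - 1 :=
  natBDeg_eq_of_represents _ (eval_interpolant f)
    (by simpa using totalDegree_interpolant_le_of_sum_eq_zero f hf)
    fun _ hq => card_sub_one_le_totalDegree_of_sum_ne_zero hq i hi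

end BooleanFunction

section UnitBall

variable {m : ℕ}

def unitBall (m : ℕ) : Finset (Fin m → ZMod 2) :=
  insert 0 (univ.image fun j => Pi.single j 1)

lemma mem_unitBall {x : Fin m → ZMod 2} :
    x ∈ unitBall m ↔ x = 0 ∨ ∃ j, x = Pi.single j 1 := by
  simp [unitBall, eq_comm]

lemma single_one_left_injective :
    Function.Injective fun j : Fin m => (Pi.single j 1 : Fin m → ZMod 2) :=
  fun i j h => by simpa [Pi.single_apply] using congrFun h i

lemma card_unitBall : #(unitBall m) = m + 1 := by
  rw [unitBall, card_insert_of_notMem, card_image_of_injective _ single_one_left_injective,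
    card_fin]
  simp [eq_comm]

lemma sum_unitBall_apply (i : Fin m) : ∑ x ∈ unitBall m, x i = 1 := by
  rw [unitBall, sum_insert (by simp [eq_comm]),
    sum_image fun _ _ _ _ h => single_one_left_injective h]
  simp [Pi.single_apply]

lemma natBDeg_unitBall_indicator (m : ℕ) :
    natBDeg (fun x : Fin m → ZMod 2 => if x = 0 ∨ ∃ j, x = Pi.single j 1 then (1 : ZMod 2) else 0)
      = if Even m then m else m - 1 := by
  simp_rw [← mem_unitBall]
  have hsum : ∑ x : Fin m → ZMod 2, (if x ∈ unitBall m then (1 : ZMod 2) else 0)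
      = ((m + 1 : ℕ) : ZMod 2) := by
    simp [card_unitBall]
  split_ifs with hm
  · refine natBDeg_eq_of_sum_ne_zero ?_
    rw [hsum, Ne, ZMod.natCast_eq_zero_iff_even]
    exact Nat.not_even_iff_odd.mpr hm.add_one
  · have hodd : Odd m := Nat.not_even_iff_odd.mp hm
    have hball : ∑ x : Fin m → ZMod 2, (if x ∈ unitBall m then (1 : ZMod 2) else 0) = 0 := by
      rw [hsum, ZMod.natCast_eq_zero_iff_even]
      exact hodd.add_one
    refine natBDeg_eq_of_sum_eq_zero hball ⟨0, hodd.pos⟩ ?_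
    simp only [add_mul, one_mul, sum_add_distrib, hball, add_zero]
    simp only [mul_ite, mul_one, mul_zero, sum_ite_mem, univ_inter, sum_unitBall_apply]
    exact one_ne_zero

end UnitBall

/-- The indicator function of `{0, e_1, …, e_{k-1}} ⊆ F_2^{k-1}` has degree `k - 2`
if `k` is even and `k - 1` if `k` is odd. -/
theorem stmt_10 (k : ℕ) (hk : 1 ≤ k) :
    natBDeg (fun x : Fin (k - 1) → ZMod 2 =>
        if x = 0 ∨ ∃ j, x = Pi.single j 1 then (1 : ZMod 2) else 0)
      = if Even k then k - 2 else k - 1 := by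
  obtain ⟨m, rfl⟩ : ∃ m, k = m + 1 := ⟨k - 1, by omega⟩
  rw [add_tsub_cancel_right, natBDeg_unitBall_indicator]
  simp only [Nat.even_add_one]
  split_ifs <;> omega
end

section
/- For any Z_4-valued quadratic form q: F_2^m → Z_4 defined by a symmetric matrix M over Z_4 via q(z) = z M z^T, there exist an r×m binary matrix W and an m×m diagonal binary matrix D such that q(z) = z(W^T W)z^T + 2·(z D z^T) for all z ∈ F_2^m, with r_0 ≤ r ≤ r_0 + 1 where r_0 is the F_2-rank of M mod 2. -/
/-!
Write `M = M̄ + 2E` entrywise, with `M̄` the residues of `M` mod 2 lifted to `{0, 1}`. Since `z` has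
entries in `{0, 1}`, the contribution of `2E` is `2 zᵀ E z`, which only depends on `zᵀ E z` mod 2;
by symmetry the off-diagonal terms cancel in pairs there, leaving the diagonal `D = diag E mod 2`.

It remains to write the symmetric `F₂`-matrix `M̄` as `Wᵀ W` with at most `rank M̄ + 1` rows, by
induction on the rank, peeling off rows `uᵢ` of `M̄`. If `M̄ᵢᵢ = 1`, adding `uᵢ uᵢᵀ` kills row `i`
and lowers the rank by one. If `M̄` is alternating and `M̄ᵢⱼ = 1`, adding `uᵢ uⱼᵀ + uⱼ uᵢᵀ` kills
rows `i, j` and lowers the rank by two, and in characteristic two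
`a aᵀ + (a + v)(a + v)ᵀ = a vᵀ + v aᵀ + v vᵀ`, so this hyperbolic term costs two squares plus a
correction square `v vᵀ`. Taking `a = uᵢ + s` merges the corrections into a single term `s sᵀ`,
which is paid for by the one extra row.
-/

open Matrix Finset

theorem Finset.sum_sum_eq_sum_diag_of_symm {ι R : Type*} [Ring R] [CharP R 2] (s : Finset ι)
    (f : ι → ι → R) (hf : ∀ a b, f a b = f b a) :
    ∑ a ∈ s, ∑ b ∈ s, f a b = ∑ a ∈ s, f a a := by
  classical
  induction s using Finset.induction_on with
  | empty => simp
  | insert x s hx ih =>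
    have hcol : ∑ a ∈ s, f a x = ∑ a ∈ s, f x a := sum_congr rfl fun a _ => hf a x
    simp only [sum_insert hx, sum_add_distrib, ih, hcol]
    rw [add_assoc, ← add_assoc (∑ b ∈ s, f x b), CharTwo.add_self_eq_zero, zero_add]

namespace Matrix

variable {m n R : Type*} [CommSemiring R]

theorem transpose_mul_self_cons {r : ℕ} (W : Matrix (Fin r) n R) (u : n → R) :
    (of (Fin.cons u W))ᵀ * of (Fin.cons u W) = vecMulVec u u + Wᵀ * W := by
  ext a b
  simp only [mul_apply, transpose_apply, of_apply, Fin.sum_univ_succ, add_apply, vecMulVec_apply]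
  rfl

variable [Fintype n]

theorem range_mulVecLin_add_vecMulVec_le {A : Matrix m n R} {P : Submodule R (m → R)}
    (hA : LinearMap.range A.mulVecLin ≤ P) {u : m → R} (hu : u ∈ P) (v : n → R) :
    LinearMap.range (A + vecMulVec u v).mulVecLin ≤ P := by
  rintro _ ⟨y, rfl⟩
  simp only [mulVecLin_apply, add_mulVec, vecMulVec_mulVec, op_smul_eq_smul]
  exact P.add_mem (hA ⟨y, rfl⟩) (P.smul_mem _ hu)

theorem range_mulVecLin_le_ker_proj {A : Matrix m n R} {i : m} (hi : A i = 0) :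
    LinearMap.range A.mulVecLin ≤ LinearMap.ker (LinearMap.proj i) := by
  rintro _ ⟨y, rfl⟩
  simp [mulVec, hi]

theorem IsSymm.row_mem_range_mulVecLin [DecidableEq n] {A : Matrix n n R} (hA : A.IsSymm)
    (i : n) : A i ∈ LinearMap.range A.mulVecLin :=
  ⟨Pi.single i 1, by ext j; simp [hA.apply]⟩

variable {K : Type*} [Field K] [CharP K 2] [DecidableEq n]

theorem IsSymm.rank_add_vecMulVec_row_lt {A : Matrix n n K} (hA : A.IsSymm) {i : n}
    (hi : A i i = 1) : (A + vecMulVec (A i) (A i)).rank < A.rank := by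
  have hrow : (A + vecMulVec (A i) (A i)) i = 0 := by
    ext b
    simp [vecMulVec_apply, hi, CharTwo.add_self_eq_zero]
  exact Submodule.finrank_lt_finrank_of_lt <| SetLike.lt_iff_le_and_exists.2
    ⟨range_mulVecLin_add_vecMulVec_le le_rfl (hA.row_mem_range_mulVecLin i) _,
      A i, hA.row_mem_range_mulVecLin i,
      fun h => by simpa [hi] using range_mulVecLin_le_ker_proj hrow h⟩

theorem IsSymm.rank_add_vecMulVec_rows_add_two_le {A : Matrix n n K} (hA : A.IsSymm)
    (hdiag : ∀ a, A a a = 0) {i j : n} (hij : A i j = 1) :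
    (A + (vecMulVec (A i) (A j) + vecMulVec (A j) (A i))).rank + 2 ≤ A.rank := by
  have hji : A j i = 1 := by rw [hA.apply i j, hij]
  have hrow_i : (A + (vecMulVec (A i) (A j) + vecMulVec (A j) (A i))) i = 0 := by
    ext b
    simp [vecMulVec_apply, hdiag i, hji, CharTwo.add_self_eq_zero]
  have hrow_j : (A + (vecMulVec (A i) (A j) + vecMulVec (A j) (A i))) j = 0 := by
    ext b
    simp [vecMulVec_apply, hdiag j, hij, CharTwo.add_self_eq_zero]
  have hu := hA.row_mem_range_mulVecLin i
  have hv := hA.row_mem_range_mulVecLin j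
  -- coordinate `j` separates `A i` from `range A'`, coordinate `i` separates `A j` from
  -- `range A' ⊔ ⟨A i⟩`, where `A'` is the new matrix
  have hP := Submodule.finrank_lt_finrank_of_lt <| SetLike.lt_iff_le_and_exists.2
    ⟨le_sup_left, A i, Submodule.mem_sup_right (Submodule.mem_span_singleton_self (A i)),
      fun h => by simpa [hij] using range_mulVecLin_le_ker_proj hrow_j h⟩
  have hQ := Submodule.finrank_lt_finrank_of_lt (t := LinearMap.range A.mulVecLin) <|
    SetLike.lt_iff_le_and_exists.2 ⟨sup_le ?_ ((Submodule.span_singleton_le_iff_mem _ _).2 hu),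
      A j, hv, fun h => by
        simpa [hji] using sup_le (range_mulVecLin_le_ker_proj hrow_i)
          ((Submodule.span_singleton_le_iff_mem _ _).2 (hdiag i)) h⟩
  · rw [rank, rank]
    omega
  · rw [← add_assoc]
    exact range_mulVecLin_add_vecMulVec_le (range_mulVecLin_add_vecMulVec_le le_rfl hu _) hv _

theorem IsSymm.exists_transpose_mul_self_eq_add_vecMulVec_of_diag_eq_zero
    {A : Matrix n n (ZMod 2)} (hA : A.IsSymm) (hdiag : ∀ a, A a a = 0) :
    ∃ (r : ℕ) (W : Matrix (Fin r) n (ZMod 2)) (s : n → ZMod 2),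
      r ≤ A.rank ∧ Wᵀ * W = A + vecMulVec s s := by
  induction hk : A.rank using Nat.strong_induction_on generalizing A with
  | _ k ih =>
  by_cases h0 : A = 0
  · exact ⟨0, 0, 0, Nat.zero_le _, by simp [h0]⟩
  obtain ⟨i, j, hij⟩ : ∃ i j, A i j = 1 := by
    by_contra! h
    exact h0 (Matrix.ext fun i j => by_contra fun hne => h i j (Fin.eq_one_of_ne_zero _ hne))
  have hA' : (A + (vecMulVec (A i) (A j) + vecMulVec (A j) (A i))).IsSymm :=
    hA.add (by simp [IsSymm, add_comm])
  have hdiag' : ∀ a, (A + (vecMulVec (A i) (A j) + vecMulVec (A j) (A i))) a a = 0 := by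
    intro a
    simp [vecMulVec_apply, hdiag a, mul_comm (A j a), ZModModule.add_self]
  have hrank := hA.rank_add_vecMulVec_rows_add_two_le hdiag hij
  obtain ⟨r, W, s, hr, hW⟩ := ih _ (by omega) hA' hdiag' rfl
  -- the hyperbolic identity with `a = A i + s` and `v = A j`
  refine ⟨r + 2, of (Fin.cons (A i + s + A j) (of (Fin.cons (A i + s) W))), s + A j, by omega, ?_⟩
  rw [transpose_mul_self_cons, transpose_mul_self_cons, hW]
  ext a b
  simp only [add_apply, vecMulVec_apply, Pi.add_apply]
  grind

theorem IsSymm.exists_transpose_mul_self_eq {A : Matrix n n (ZMod 2)} (hA : A.IsSymm) :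
    ∃ (r : ℕ) (W : Matrix (Fin r) n (ZMod 2)), r ≤ A.rank + 1 ∧ Wᵀ * W = A := by
  induction hk : A.rank using Nat.strong_induction_on generalizing A with
  | _ k ih =>
  by_cases hdiag : ∀ a, A a a = 0
  · obtain ⟨r, W, s, hr, hW⟩ :=
      hA.exists_transpose_mul_self_eq_add_vecMulVec_of_diag_eq_zero hdiag
    refine ⟨r + 1, of (Fin.cons s W), by omega, ?_⟩
    rw [transpose_mul_self_cons, hW, add_left_comm, ZModModule.add_self, add_zero]
  obtain ⟨i, hi⟩ := not_forall.1 hdiag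
  replace hi : A i i = 1 := Fin.eq_one_of_ne_zero _ hi
  have hrank := hA.rank_add_vecMulVec_row_lt hi
  obtain ⟨r, W, hr, hW⟩ :=
    ih _ (by omega) (A := A + vecMulVec (A i) (A i)) (hA.add (by simp [IsSymm])) rfl
  refine ⟨r + 1, of (Fin.cons (A i) W), by omega, ?_⟩
  rw [transpose_mul_self_cons, hW, add_left_comm, ZModModule.add_self, add_zero]

end Matrix

namespace ZMod

/-- `x = x̄ + 2 * carry x`, where `x̄ ∈ {0, 1}` lifts the residue of `x` mod 2. -/
def carry (x : ZMod 4) : ZMod 2 := (x.val / 2 : ℕ)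

def twiceVal : ZMod 2 →+ ZMod 4 := AddMonoidHom.mk' (fun x => 2 * (x.val : ZMod 4)) (by decide)

theorem val_mul_mul_val_eq (x : ZMod 4) (p q : ZMod 2) :
    (p.val : ZMod 4) * x * q.val
      = p.val * (castHom (by norm_num : 2 ∣ 4) (ZMod 2) x).val * q.val
        + twiceVal (p * carry x * q) := by
  revert x p q
  decide

end ZMod

theorem Matrix.IsSymm.sum_val_mul_mul_val_eq {n : Type*} [Fintype n] {M : Matrix n n (ZMod 4)}
    (hM : M.IsSymm) (z : n → ZMod 2) :
    ∑ a, ∑ b, ((z a).val : ZMod 4) * M a b * (z b).val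
      = ∑ a, ∑ b, ((z a).val : ZMod 4)
            * ((M.map (ZMod.castHom (by norm_num : 2 ∣ 4) (ZMod 2))) a b).val * (z b).val
        + 2 * ((∑ a, z a * ZMod.carry (M a a) * z a).val : ZMod 4) := by
  have hsymm : ∀ a b, z a * ZMod.carry (M a b) * z b = z b * ZMod.carry (M b a) * z a :=
    fun a b => by rw [hM.apply a b]; ring
  calc _ = ∑ a, ∑ b, (((z a).val : ZMod 4)
            * (ZMod.castHom (by norm_num : 2 ∣ 4) (ZMod 2) (M a b)).val * (z b).val
          + ZMod.twiceVal (z a * ZMod.carry (M a b) * z b)) :=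
        sum_congr rfl fun a _ => sum_congr rfl fun b _ => ZMod.val_mul_mul_val_eq _ _ _
    _ = _ := by
      simp only [sum_add_distrib, ← map_sum, sum_sum_eq_sum_diag_of_symm _ _ hsymm]
      rfl

/-- Any `Z_4`-valued quadratic form `q(z) = z M zᵀ` on `F_2^m` can be written as
`z (Wᵀ W) zᵀ + 2 · (z D zᵀ)` with `W` an `r × m` binary matrix, `D` diagonal binary,
and `r₀ ≤ r ≤ r₀ + 1` where `r₀` is the `F_2`-rank of `M mod 2`. -/
theorem stmt_16 (m : ℕ) (M : Matrix (Fin m) (Fin m) (ZMod 4)) (hM : M.IsSymm) :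
    ∃ (r : ℕ) (W : Matrix (Fin r) (Fin m) (ZMod 2)) (D : Fin m → ZMod 2),
      (M.map (ZMod.castHom (show (2:ℕ) ∣ 4 by norm_num) (ZMod 2))).rank ≤ r ∧
      r ≤ (M.map (ZMod.castHom (show (2:ℕ) ∣ 4 by norm_num) (ZMod 2))).rank + 1 ∧
      ∀ z : Fin m → ZMod 2,
        ∑ a, ∑ b, ((z a).val : ZMod 4) * M a b * ((z b).val : ZMod 4)
          = (∑ a, ∑ b, ((z a).val : ZMod 4) * (((Wᵀ * W) a b).val : ZMod 4)
              * ((z b).val : ZMod 4))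
            + 2 * ((∑ a, z a * D a * z a).val : ZMod 4) := by
  obtain ⟨r, W, hr, hW⟩ :=
    (hM.map (ZMod.castHom (show (2:ℕ) ∣ 4 by norm_num) (ZMod 2))).exists_transpose_mul_self_eq
  refine ⟨r, W, fun a => ZMod.carry (M a a), ?_, hr, fun z => ?_⟩
  · rw [← hW]
    exact (rank_mul_le_left _ _).trans ((rank_le_card_width _).trans_eq (Fintype.card_fin r))
  · rw [hW]
    exact hM.sum_val_mul_mul_val_eq z
end

section
/- Let G be a triorthogonal matrix with odd-weight rows G_1 (k rows g_1,...,g_k on n columns) and even-weight rows G_0. If n + k is even, then the vector v = 1_n + g_1 + ... + g_k has even Hamming weight, and adjoining v as a new row to G_0 preserves triorthogonality of the whole matrix. -/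
/-!
Over `ZMod 2` every `x` satisfies `x * x = x`, so `⟨g, g⟩ = |g| mod 2` and `⟨g, g, r⟩ = ⟨g, r⟩`.
Expanding `v = 1 + ∑ₐ gₐ`, the sum `∑ₐ ⟨gₐ, r⟩` collapses by pairwise orthogonality to
`|r|` for an odd row `r` and to `0` for an even one, so `⟨v, r⟩ = |r| + ∑ₐ ⟨gₐ, r⟩` vanishes;
likewise `⟨v, r, r'⟩ = ⟨r, r'⟩ + ∑ₐ ⟨gₐ, r, r'⟩`, where each summand is a triple product or
collapses to `⟨r, r'⟩`. Finally `|v| ≡ n + k`, and `v * v = v` reduces the last condition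
to `⟨v, r⟩ = 0`.
-/

open Finset

theorem ZMod.mul_self_two (x : ZMod 2) : x * x = x := by
  fin_cases x <;> rfl

section Parity

variable {κ : Type*} [Fintype κ]

theorem ZMod.sum_two_eq_card_filter_ne_zero (w : κ → ZMod 2) :
    ∑ c, w c = #{c | w c ≠ 0} := by
  rw [natCast_card_filter]
  refine sum_congr rfl fun c _ => ?_
  generalize w c = x
  fin_cases x <;> rfl

theorem even_card_filter_ne_zero_iff (w : κ → ZMod 2) :
    Even #{c | w c ≠ 0} ↔ ∑ c, w c = 0 := by
  rw [ZMod.sum_two_eq_card_filter_ne_zero, ZMod.natCast_eq_zero_iff_even]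

theorem odd_card_filter_ne_zero_iff (w : κ → ZMod 2) :
    Odd #{c | w c ≠ 0} ↔ ∑ c, w c = 1 := by
  rw [ZMod.sum_two_eq_card_filter_ne_zero, ZMod.natCast_eq_one_iff_odd]

end Parity

theorem sum_one_add_sum_mul {ι κ M : Type*} [Fintype κ] [CommSemiring M] (s : Finset ι)
    (R : ι → κ → M) (w : κ → M) :
    ∑ c, (1 + ∑ a ∈ s, R a c) * w c = ∑ c, w c + ∑ a ∈ s, ∑ c, R a c * w c := by
  simp only [add_mul, one_mul, sum_add_distrib, sum_mul]
  rw [sum_comm]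

section Triorthogonal

variable {ι κ : Type*} [Fintype κ]

def PairwiseOrthogonal (R : ι → κ → ZMod 2) : Prop :=
  ∀ i j, i ≠ j → ∑ c, R i c * R j c = 0

def TriplewiseOrthogonal (R : ι → κ → ZMod 2) : Prop :=
  ∀ i j l, i ≠ j → j ≠ l → i ≠ l → ∑ c, R i c * R j c * R l c = 0

variable {R : ι → κ → ZMod 2}

theorem PairwiseOrthogonal.sum_sum_mul_eq_ite [DecidableEq ι] (h : PairwiseOrthogonal R)
    (s : Finset ι) (i : ι) :
    ∑ a ∈ s, ∑ c, R a c * R i c = if i ∈ s then ∑ c, R i c else 0 := by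
  split_ifs with hi
  · rw [sum_eq_single_of_mem i hi fun a _ hai => h a i hai]
    simp only [ZMod.mul_self_two]
  · exact sum_eq_zero fun a ha => h a i (ne_of_mem_of_not_mem ha hi)

theorem TriplewiseOrthogonal.sum_sum_mul_mul_eq_zero (h2 : PairwiseOrthogonal R)
    (h3 : TriplewiseOrthogonal R) (s : Finset ι) {i j : ι} (hij : i ≠ j) :
    ∑ a ∈ s, ∑ c, R a c * R i c * R j c = 0 := by
  refine sum_eq_zero fun a _ => ?_
  obtain rfl | hai := eq_or_ne a i
  · simp only [ZMod.mul_self_two]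
    exact h2 a j hij
  obtain rfl | haj := eq_or_ne a j
  · rw [← h2 i a hij]
    exact sum_congr rfl fun c _ => by rw [mul_right_comm, ZMod.mul_self_two, mul_comm]
  exact h3 a i j hai hij haj

variable (s : Finset ι)

theorem sum_one_add_sum_mul_eq_zero [DecidableEq ι] (h : PairwiseOrthogonal R) {i : ι}
    (hi : i ∉ s → ∑ c, R i c = 0) :
    ∑ c, (1 + ∑ a ∈ s, R a c) * R i c = 0 := by
  rw [sum_one_add_sum_mul, h.sum_sum_mul_eq_ite]
  split_ifs with his
  · exact CharTwo.add_self_eq_zero _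
  · rw [hi his, add_zero]

theorem sum_one_add_sum_mul_mul_eq_zero (h2 : PairwiseOrthogonal R)
    (h3 : TriplewiseOrthogonal R) {i j : ι} (hij : i ≠ j) :
    ∑ c, (1 + ∑ a ∈ s, R a c) * R i c * R j c = 0 := by
  simp only [mul_assoc]
  rw [sum_one_add_sum_mul]
  simp only [← mul_assoc]
  rw [h2 i j hij, h3.sum_sum_mul_mul_eq_zero h2 s hij, add_zero]

theorem sum_one_add_sum_eq_card_add_card (hs : ∀ a ∈ s, ∑ c, R a c = 1) :
    ∑ c, (1 + ∑ a ∈ s, R a c) = Fintype.card κ + #s := by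
  rw [sum_add_distrib, sum_comm, sum_congr rfl hs]
  simp

end Triorthogonal

/-- Let `G` be a triorthogonal matrix with odd-weight rows `G1` (`k` rows on `n`
columns) and even-weight rows `G0`.  If `n + k` is even, then
`v = 1_n + g_1 + ⋯ + g_k` has even Hamming weight, and adjoining `v` as a new row
preserves triorthogonality of the whole matrix. -/
theorem stmt_18 (n k g : ℕ) (G1 : Fin k → Fin n → ZMod 2) (G0 : Fin g → Fin n → ZMod 2)
    (hodd : ∀ a, Odd (Finset.univ.filter fun j => G1 a j ≠ 0).card)
    (heven : ∀ b, Even (Finset.univ.filter fun j => G0 b j ≠ 0).card)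
    (horth : ∀ i j : Fin k ⊕ Fin g, i ≠ j →
      ∑ c, Sum.elim G1 G0 i c * Sum.elim G1 G0 j c = 0)
    (htri : ∀ i j l : Fin k ⊕ Fin g, i ≠ j → j ≠ l → i ≠ l →
      ∑ c, Sum.elim G1 G0 i c * Sum.elim G1 G0 j c * Sum.elim G1 G0 l c = 0)
    (hnk : Even (n + k))
    (v : Fin n → ZMod 2) (hv : v = fun c => 1 + ∑ a, G1 a c) :
    Even (Finset.univ.filter fun c => v c ≠ 0).card ∧
    (∀ i : Fin k ⊕ Fin g, ∑ c, v c * Sum.elim G1 G0 i c = 0) ∧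
    (∀ i j : Fin k ⊕ Fin g, i ≠ j →
      ∑ c, v c * Sum.elim G1 G0 i c * Sum.elim G1 G0 j c = 0) ∧
    (∀ i : Fin k ⊕ Fin g, ∑ c, v c * v c * Sum.elim G1 G0 i c = 0) := by
  set s := (univ : Finset (Fin k)).map .inl
  replace hv : v = fun c => 1 + ∑ a ∈ s, Sum.elim G1 G0 a c := by
    simp [hv, s, sum_map]
  have hinner (i) : ∑ c, v c * Sum.elim G1 G0 i c = 0 := by
    refine hv ▸ sum_one_add_sum_mul_eq_zero s horth fun hi => ?_
    obtain a | b := i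
    · simp [s] at hi
    · exact (even_card_filter_ne_zero_iff _).mp (heven b)
  refine ⟨?_, hinner, fun i j => hv ▸ sum_one_add_sum_mul_mul_eq_zero s horth htri, ?_⟩
  · rw [even_card_filter_ne_zero_iff, hv, sum_one_add_sum_eq_card_add_card]
    · simpa [s, ← Nat.cast_add, ZMod.natCast_eq_zero_iff_even] using hnk
    · simpa [s, odd_card_filter_ne_zero_iff] using hodd
  · simpa only [ZMod.mul_self_two] using hinner
end

section
/- Let H ⊆ F_2^c be a triorthogonal subspace. If there exists t ∈ Z_8^c with all entries odd such that h · t = 0 mod 8 for every h ∈ H (level-3 divisibility), then for every h, h' ∈ H the componentwise product satisfies (h ∧ h') · t = 0 mod 4. -/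
/-! Lifting `h + h'` to `{0,1}` gives `h + h' - 2 (h ∧ h')`, so `2 (h ∧ h') · t` is a combination
of the three dot products `h · t`, `h' · t`, `(h + h') · t`, all divisible by `8`. -/

theorem ZMod.intCast_val_add_two (a b : ZMod 2) :
    ((a + b).val : ℤ) = a.val + b.val - 2 * (a.val * b.val) := by
  decide +revert

theorem ZMod.sum_intCast_val_add_mul {ι : Type*} [Fintype ι] (h h' : ι → ZMod 2) (t : ι → ℤ) :
    ∑ i, (((h + h') i).val : ℤ) * t i =
      ∑ i, ((h i).val : ℤ) * t i + ∑ i, ((h' i).val : ℤ) * t i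
        - 2 * ∑ i, ((h i).val : ℤ) * ((h' i).val : ℤ) * t i := by
  simp only [Pi.add_apply, ZMod.intCast_val_add_two, Finset.mul_sum, ← Finset.sum_add_distrib,
    ← Finset.sum_sub_distrib]
  exact Finset.sum_congr rfl fun i _ => by ring

theorem stmt_19_general (c : ℕ) (H : Submodule (ZMod 2) (Fin c → ZMod 2))
    (t : Fin c → ℤ)
    (hdiv : ∀ h ∈ H, (∑ i, ((h i).val : ℤ) * t i) % 8 = 0) :
    ∀ h ∈ H, ∀ h' ∈ H,
      (∑ i, ((h i).val : ℤ) * ((h' i).val : ℤ) * t i) % 4 = 0 := by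
  intro h hh h' hh'
  have hsum := hdiv (h + h') (H.add_mem hh hh')
  rw [ZMod.sum_intCast_val_add_mul] at hsum
  have := hdiv h hh
  have := hdiv h' hh'
  omega

/-- If a triorthogonal subspace `H ⊆ F_2^c` is divisible at level 3, witnessed by an
integral vector `t` with all odd entries such that `h · t ≡ 0 (mod 8)` for every
`h ∈ H`, then for all `h, h' ∈ H` the componentwise product satisfies
`(h ∧ h') · t ≡ 0 (mod 4)`. -/
theorem stmt_19 (c : ℕ) (H : Submodule (ZMod 2) (Fin c → ZMod 2))
    (htri : ∀ u ∈ H, ∀ v ∈ H, ∀ w ∈ H, ∑ i, u i * v i * w i = 0)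
    (t : Fin c → ℤ) (htodd : ∀ i, Odd (t i))
    (hdiv : ∀ h ∈ H, (∑ i, ((h i).val : ℤ) * t i) % 8 = 0) :
    ∀ h ∈ H, ∀ h' ∈ H,
      (∑ i, ((h i).val : ℤ) * ((h' i).val : ℤ) * t i) % 4 = 0 :=
  stmt_19_general c H t hdiv
end
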